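/- Let n ≥ 1, C ∈ ℝ^{1×n}, θ ∈ ℝ, t₀ ∈ ℝ, let 𝒜 : ℝ → ℝ^{n×n} be continuous and bounded, and let S₀ ∈ ℝ^{n×n} be symmetric. Then there exists a unique differentiable S : [t₀,∞) → ℝ^{n×n} with S(t₀) = S₀ and S'(t) = −𝒜(t)ᵀS(t) − S(t)𝒜(t) − θS(t) + CᵀC for all t ≥ t₀; moreover S(t) is symmetric for every t ≥ t₀. -/

import Mathlib

/-!
A time-dependent vector field that is `K`-Lipschitz in the state, uniformly in time, with `v t 0`
bounded, satisfies the Picard–Lindelöf hypotheses on every interval `[a, a + h]` with `K h ≤ 1/2`,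
whatever the initial value. Gluing such pieces solves the equation on every `[t₀, T]`; by Grönwall
uniqueness these solutions agree, so they patch to a solution on `[t₀, ∞)`.

For the operator norm, `X ↦ -𝒜ᵀX - X𝒜 - θX + CᵀC` is `(2M + |θ|)`-Lipschitz. It commutes with
transposition, so the transpose of the solution solves the same problem with the same symmetric
initial value and hence, by uniqueness, equals the solution.
-/

open Matrix Set Filter Topology Metric
open scoped NNReal

section GlobalSolution

variable {E : Type*} [NormedAddCommGroup E] [NormedSpace ℝ E]
  {v : ℝ → E → E} {γ γ₁ γ₂ : ℝ → E} {s : Set ℝ} {a b c : ℝ} {K : ℝ≥0}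

theorem HasDerivWithinAt.Ici_of_Icc {f : ℝ → E} {f' : E} {t : ℝ}
    (hf : HasDerivWithinAt f f' (Icc a b) t) (ht : t ∈ Ico a b) :
    HasDerivWithinAt f f' (Ici t) t :=
  hf.mono_of_mem_nhdsWithin (Icc_mem_nhdsGE_of_mem ht)

theorem IsIntegralCurveOn.eqOn_Icc (hv : ∀ t, LipschitzWith K (v t))
    (h₁ : IsIntegralCurveOn γ₁ v (Icc a b)) (h₂ : IsIntegralCurveOn γ₂ v (Icc a b))
    (ha : γ₁ a = γ₂ a) : EqOn γ₁ γ₂ (Icc a b) :=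
  ODE_solution_unique_of_mem_Icc_right (s := fun _ => univ) (fun t _ => (hv t).lipschitzOnWith)
    h₁.continuousOn (fun t ht => (h₁ t (Ico_subset_Icc_self ht)).Ici_of_Icc ht)
    (fun _ _ => mem_univ _)
    h₂.continuousOn (fun t ht => (h₂ t (Ico_subset_Icc_self ht)).Ici_of_Icc ht)
    (fun _ _ => mem_univ _) ha

theorem IsIntegralCurveOn.eqOn_Ici (hv : ∀ t, LipschitzWith K (v t))
    (h₁ : IsIntegralCurveOn γ₁ v (Ici a)) (h₂ : IsIntegralCurveOn γ₂ v (Ici a))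
    (ha : γ₁ a = γ₂ a) : EqOn γ₁ γ₂ (Ici a) := fun _ ht =>
  (h₁.mono Icc_subset_Ici_self).eqOn_Icc hv (h₂.mono Icc_subset_Ici_self) ha (right_mem_Icc.2 ht)

theorem IsIntegralCurveOn.hasDerivWithinAt_of_eqOn (h : IsIntegralCurveOn γ₁ v s)
    (hs : IsClosed s) (hγ : EqOn γ γ₁ s) (t : ℝ) : HasDerivWithinAt γ (v t (γ t)) s t := by
  by_cases ht : t ∈ s
  · rw [hγ ht]
    exact (h t ht).congr hγ (hγ ht)
  · exact HasFDerivWithinAt.of_notMem_closure (by rwa [hs.closure_eq])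

theorem IsIntegralCurveOn.ite_Icc (h₁ : IsIntegralCurveOn γ₁ v (Icc a b))
    (h₂ : IsIntegralCurveOn γ₂ v (Icc b c)) (hb : γ₁ b = γ₂ b) (hab : a ≤ b) (hbc : b ≤ c) :
    IsIntegralCurveOn (fun t => if t ≤ b then γ₁ t else γ₂ t) v (Icc a c) := by
  have e₁ : EqOn (fun t => if t ≤ b then γ₁ t else γ₂ t) γ₁ (Icc a b) := fun t ht => if_pos ht.2
  have e₂ : EqOn (fun t => if t ≤ b then γ₁ t else γ₂ t) γ₂ (Icc b c) := fun t ht => by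
    rcases ht.1.eq_or_lt with rfl | hlt
    · exact (if_pos le_rfl).trans hb
    · exact if_neg hlt.not_ge
  intro t _
  rw [← Icc_union_Icc_eq_Icc hab hbc]
  exact (h₁.hasDerivWithinAt_of_eqOn isClosed_Icc e₁ t).union
    (h₂.hasDerivWithinAt_of_eqOn isClosed_Icc e₂ t)

variable [CompleteSpace E] {B : ℝ}

theorem exists_isIntegralCurveOn_Icc_add (hv : ∀ t, LipschitzWith K (v t))
    (hvc : ∀ x, Continuous (v · x)) (hB : ∀ t, ‖v t 0‖ ≤ B) {h : ℝ} (hh : 0 ≤ h)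
    (hKh : K * h ≤ 1 / 2) (a : ℝ) (x : E) :
    ∃ γ, γ a = x ∧ IsIntegralCurveOn γ v (Icc a (a + h)) := by
  have hB0 : 0 ≤ B := (norm_nonneg _).trans (hB 0)
  -- chosen so that the speed bound on `closedBall x R` times `h` is at most `R`
  set R := 2 * h * (K * ‖x‖ + B)
  have hR : 0 ≤ R := by positivity
  have hbound : ∀ t, ∀ y ∈ closedBall x R, ‖v t y‖ ≤ K * (‖x‖ + R) + B := fun t y hy => calc
    ‖v t y‖ ≤ ‖v t y - v t 0‖ + ‖v t 0‖ := norm_le_norm_sub_add _ _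
    _ ≤ K * ‖y‖ + B := by
      gcongr
      · simpa using (hv t).norm_sub_le y 0
      · exact hB t
    _ ≤ K * (‖x‖ + R) + B := by
      gcongr
      exact norm_le_of_mem_closedBall hy
  have hPL : IsPicardLindelof v (tmin := a) (tmax := a + h) ⟨a, left_mem_Icc.2 (by linarith)⟩ x
      ⟨R, hR⟩ 0 ⟨K * (‖x‖ + R) + B, by positivity⟩ K := by
    refine ⟨fun t _ => (hv t).lipschitzOnWith, fun y _ => (hvc y).continuousOn,
      fun t _ y hy => hbound t y hy, ?_⟩
    simp only [NNReal.coe_zero, sub_zero, add_sub_cancel_left, sub_self, max_eq_left hh]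
    show (K * (‖x‖ + R) + B) * h ≤ R
    calc (K * (‖x‖ + R) + B) * h = R / 2 + K * h * R := by ring
      _ ≤ R / 2 + 1 / 2 * R := by gcongr
      _ = R := by ring
  exact hPL.exists_eq_forall_mem_Icc_hasDerivWithinAt₀

theorem exists_isIntegralCurveOn_Icc (hv : ∀ t, LipschitzWith K (v t))
    (hvc : ∀ x, Continuous (v · x)) (hB : ∀ t, ‖v t 0‖ ≤ B) (a T : ℝ) (x : E) :
    ∃ γ, γ a = x ∧ IsIntegralCurveOn γ v (Icc a T) := by
  set h : ℝ := (2 * K + 1)⁻¹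
  have hh : 0 < h := by positivity
  have hKh : K * h ≤ 1 / 2 := by
    rw [← div_eq_mul_inv, div_le_iff₀ (by positivity)]
    linarith
  have hsteps : ∀ k : ℕ, ∃ γ, γ a = x ∧ IsIntegralCurveOn γ v (Icc a (a + k * h)) := by
    intro k
    induction k with
    | zero =>
      exact ⟨fun _ => x, rfl, fun _ _ => HasFDerivWithinAt.of_subsingleton (by simp)⟩
    | succ k ih =>
      obtain ⟨γ₁, hγ₁a, hγ₁⟩ := ih
      obtain ⟨γ₂, hγ₂a, hγ₂⟩ :=
        exists_isIntegralCurveOn_Icc_add hv hvc hB hh.le hKh (a + k * h) (γ₁ (a + k * h))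
      have hak : a ≤ a + k * h := le_add_of_nonneg_right (by positivity)
      refine ⟨fun t => if t ≤ a + k * h then γ₁ t else γ₂ t, by simp [hak, hγ₁a], ?_⟩
      convert hγ₁.ite_Icc hγ₂ hγ₂a.symm hak (by linarith) using 2
      push_cast
      ring
  obtain ⟨k, hk⟩ := exists_nat_ge ((T - a) / h)
  obtain ⟨γ, hγa, hγ⟩ := hsteps k
  refine ⟨γ, hγa, hγ.mono (Icc_subset_Icc_right ?_)⟩
  rw [div_le_iff₀ hh] at hk
  linarith

theorem exists_isIntegralCurveOn_Ici (hv : ∀ t, LipschitzWith K (v t))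
    (hvc : ∀ x, Continuous (v · x)) (hB : ∀ t, ‖v t 0‖ ≤ B) (a : ℝ) (x : E) :
    ∃ γ, γ a = x ∧ IsIntegralCurveOn γ v (Ici a) := by
  choose γ hγa hγ using fun T => exists_isIntegralCurveOn_Icc hv hvc hB a T x
  refine ⟨fun t => γ (t + 1) t, hγa _, fun t ht => ?_⟩
  have hagree : EqOn (fun τ => γ (τ + 1) τ) (γ (t + 1)) (Icc a (t + 1)) := fun τ hτ =>
    ((hγ (τ + 1)).mono (Icc_subset_Icc_right (by linarith))).eqOn_Icc hv
      ((hγ (t + 1)).mono (Icc_subset_Icc_right hτ.2)) ((hγa _).trans (hγa _).symm)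
      (right_mem_Icc.2 hτ.1)
  have hnhds : Icc a (t + 1) ∈ 𝓝[Ici a] t :=
    mem_nhdsWithin.2 ⟨Iio (t + 1), isOpen_Iio, by simp, fun τ hτ => ⟨hτ.2, hτ.1.le⟩⟩
  have htmem : t ∈ Icc a (t + 1) := ⟨ht, by linarith⟩
  exact ((hγ (t + 1) t htmem).congr hagree (hagree htmem)).mono_of_mem_nhdsWithin hnhds

end GlobalSolution

section MatrixDeriv

variable {m n : Type*} [Fintype n] {S : ℝ → Matrix m n ℝ} {V : Matrix m n ℝ}
  {s : Set ℝ} {t : ℝ}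

theorem hasDerivWithinAt_matrix_iff :
    HasDerivWithinAt S V s t ↔ ∀ i j, HasDerivWithinAt (fun τ => S τ i j) (V i j) s t :=
  hasDerivWithinAt_pi.trans (forall_congr' fun _ => hasDerivWithinAt_pi)

theorem HasDerivWithinAt.matrix_transpose [Fintype m] (h : HasDerivWithinAt S V s t) :
    HasDerivWithinAt (fun τ => (S τ)ᵀ) Vᵀ s t :=
  hasDerivWithinAt_matrix_iff.2 fun i j => hasDerivWithinAt_matrix_iff.1 h j i

end MatrixDeriv

section Lyapunov

-- The operator norm is submultiplicative and invariant under transposition, and its topology is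
-- the product topology, so `hasDerivWithinAt_matrix_iff` applies to curves in it.
open scoped Matrix.Norms.L2Operator

variable {ι : Type*} [Fintype ι]

def lyapunovField (𝒜 : ℝ → Matrix ι ι ℝ) (θ : ℝ) (Q : Matrix ι ι ℝ) (t : ℝ)
    (X : Matrix ι ι ℝ) : Matrix ι ι ℝ :=
  -(𝒜 t)ᵀ * X - X * 𝒜 t - θ • X + Q

variable {𝒜 : ℝ → Matrix ι ι ℝ} {θ : ℝ} {Q : Matrix ι ι ℝ} {M : ℝ}

theorem lyapunovField_sub (t : ℝ) (X Y : Matrix ι ι ℝ) :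
    lyapunovField 𝒜 θ Q t X - lyapunovField 𝒜 θ Q t Y
      = -(𝒜 t)ᵀ * (X - Y) - (X - Y) * 𝒜 t - θ • (X - Y) := by
  simp only [lyapunovField, mul_sub, sub_mul, smul_sub]
  abel

theorem transpose_lyapunovField (hQ : Qᵀ = Q) (t : ℝ) (X : Matrix ι ι ℝ) :
    (lyapunovField 𝒜 θ Q t X)ᵀ = lyapunovField 𝒜 θ Q t Xᵀ := by
  simp only [lyapunovField, transpose_add, transpose_sub, transpose_mul, transpose_smul,
    transpose_neg, transpose_transpose, hQ, neg_mul]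
  abel

theorem continuous_lyapunovField_apply (h𝒜 : Continuous 𝒜) (X : Matrix ι ι ℝ) :
    Continuous (lyapunovField 𝒜 θ Q · X) := by
  unfold lyapunovField
  fun_prop

variable [DecidableEq ι]

theorem lipschitzWith_lyapunovField (hM : ∀ t, ‖𝒜 t‖ ≤ M) (t : ℝ) :
    LipschitzWith (2 * M + |θ|).toNNReal (lyapunovField 𝒜 θ Q t) := by
  refine LipschitzWith.of_dist_le' fun X Y => ?_
  have hAt : ‖(𝒜 t)ᵀ‖ = ‖𝒜 t‖ := by
    rw [← conjTranspose_eq_transpose_of_trivial, l2_opNorm_conjTranspose]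
  rw [dist_eq_norm, dist_eq_norm, lyapunovField_sub]
  calc ‖-(𝒜 t)ᵀ * (X - Y) - (X - Y) * 𝒜 t - θ • (X - Y)‖
      ≤ ‖(𝒜 t)ᵀ‖ * ‖X - Y‖ + ‖X - Y‖ * ‖𝒜 t‖ + |θ| * ‖X - Y‖ := by
        grw [norm_sub_le, norm_sub_le, norm_mul_le, norm_mul_le, norm_neg, norm_smul,
          Real.norm_eq_abs]
    _ ≤ (2 * M + |θ|) * ‖X - Y‖ := by
        rw [hAt]
        nlinarith [hM t, norm_nonneg (X - Y)]

theorem exists_isIntegralCurveOn_Ici_lyapunovField (h𝒜 : Continuous 𝒜)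
    (hM : ∀ t, ‖𝒜 t‖ ≤ M) (t₀ : ℝ) (S₀ : Matrix ι ι ℝ) :
    ∃ S, S t₀ = S₀ ∧ IsIntegralCurveOn S (lyapunovField 𝒜 θ Q) (Ici t₀) :=
  exists_isIntegralCurveOn_Ici (lipschitzWith_lyapunovField hM)
    (continuous_lyapunovField_apply h𝒜) (B := ‖Q‖) (fun t => by simp [lyapunovField]) t₀ S₀

variable {S S₁ S₂ : ℝ → Matrix ι ι ℝ}

theorem IsIntegralCurveOn.eqOn_Ici_lyapunovField (hM : ∀ t, ‖𝒜 t‖ ≤ M) {t₀ : ℝ}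
    (h₁ : IsIntegralCurveOn S₁ (lyapunovField 𝒜 θ Q) (Ici t₀))
    (h₂ : IsIntegralCurveOn S₂ (lyapunovField 𝒜 θ Q) (Ici t₀)) (ht₀ : S₁ t₀ = S₂ t₀) :
    EqOn S₁ S₂ (Ici t₀) :=
  h₁.eqOn_Ici (lipschitzWith_lyapunovField hM) h₂ ht₀

theorem IsIntegralCurveOn.transpose_lyapunovField {s : Set ℝ}
    (hS : IsIntegralCurveOn S (lyapunovField 𝒜 θ Q) s) (hQ : Qᵀ = Q) :
    IsIntegralCurveOn (fun t => (S t)ᵀ) (lyapunovField 𝒜 θ Q) s := fun t ht => by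
  simpa only [_root_.transpose_lyapunovField hQ] using (hS t ht).matrix_transpose

end Lyapunov

theorem lyapunov_ode_existence_uniqueness_symmetric_general
    {n : ℕ} (C : Matrix (Fin 1) (Fin n) ℝ) (θ t₀ : ℝ)
    (𝒜 : ℝ → Matrix (Fin n) (Fin n) ℝ) (h𝒜 : Continuous 𝒜)
    (M : ℝ) (hM : ∀ t : ℝ, ‖Matrix.toEuclideanCLM (𝕜 := ℝ) (𝒜 t)‖ ≤ M)
    (S₀ : Matrix (Fin n) (Fin n) ℝ) (hS₀ : S₀ᵀ = S₀) :
    ∃ S : ℝ → Matrix (Fin n) (Fin n) ℝ,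
      (S t₀ = S₀ ∧ ∀ t ∈ Set.Ici t₀, ∀ i j, HasDerivWithinAt (fun τ => S τ i j)
        ((-(𝒜 t)ᵀ * S t - S t * 𝒜 t - θ • S t + Cᵀ * C) i j) (Set.Ici t₀) t)
      ∧ (∀ t ∈ Set.Ici t₀, (S t)ᵀ = S t)
      ∧ ∀ S₂ : ℝ → Matrix (Fin n) (Fin n) ℝ,
          (S₂ t₀ = S₀ ∧ ∀ t ∈ Set.Ici t₀, ∀ i j, HasDerivWithinAt (fun τ => S₂ τ i j)
            ((-(𝒜 t)ᵀ * S₂ t - S₂ t * 𝒜 t - θ • S₂ t + Cᵀ * C) i j) (Set.Ici t₀) t)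
          → ∀ t ∈ Set.Ici t₀, S₂ t = S t := by
  have hQ : (Cᵀ * C)ᵀ = Cᵀ * C := by rw [transpose_mul, transpose_transpose]
  obtain ⟨S, hSt₀, hS⟩ :=
    exists_isIntegralCurveOn_Ici_lyapunovField (θ := θ) (Q := Cᵀ * C) h𝒜 hM t₀ S₀
  refine ⟨S, ⟨hSt₀, fun t ht => hasDerivWithinAt_matrix_iff.1 (hS t ht)⟩, ?_, ?_⟩
  · exact (hS.transpose_lyapunovField hQ).eqOn_Ici_lyapunovField hM hS (by rw [hSt₀, hS₀])
  · rintro S₂ ⟨hS₂t₀, hS₂⟩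
    exact IsIntegralCurveOn.eqOn_Ici_lyapunovField hM
      (fun t ht => hasDerivWithinAt_matrix_iff.2 (hS₂ t ht)) hS (hS₂t₀.trans hSt₀.symm)

/-- For continuous bounded `𝒜` and symmetric `S₀`, the Lyapunov differential
equation `S' = −𝒜ᵀS − S𝒜 − θS + CᵀC`, `S(t₀) = S₀`, has a solution on `[t₀,∞)`, unique
on `[t₀,∞)`, and the solution is symmetric for every `t ≥ t₀`. -/
theorem lyapunov_ode_existence_uniqueness_symmetric
    {n : ℕ} (hn : 1 ≤ n) (C : Matrix (Fin 1) (Fin n) ℝ) (θ t₀ : ℝ)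
    (𝒜 : ℝ → Matrix (Fin n) (Fin n) ℝ) (h𝒜 : Continuous 𝒜)
    (M : ℝ) (hM : ∀ t : ℝ, ‖Matrix.toEuclideanCLM (𝕜 := ℝ) (𝒜 t)‖ ≤ M)
    (S₀ : Matrix (Fin n) (Fin n) ℝ) (hS₀ : S₀ᵀ = S₀) :
    ∃ S : ℝ → Matrix (Fin n) (Fin n) ℝ,
      (S t₀ = S₀ ∧ ∀ t ∈ Set.Ici t₀, ∀ i j, HasDerivWithinAt (fun τ => S τ i j)
        ((-(𝒜 t)ᵀ * S t - S t * 𝒜 t - θ • S t + Cᵀ * C) i j) (Set.Ici t₀) t)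
      ∧ (∀ t ∈ Set.Ici t₀, (S t)ᵀ = S t)
      ∧ ∀ S₂ : ℝ → Matrix (Fin n) (Fin n) ℝ,
          (S₂ t₀ = S₀ ∧ ∀ t ∈ Set.Ici t₀, ∀ i j, HasDerivWithinAt (fun τ => S₂ τ i j)
            ((-(𝒜 t)ᵀ * S₂ t - S₂ t * 𝒜 t - θ • S₂ t + Cᵀ * C) i j) (Set.Ici t₀) t)
          → ∀ t ∈ Set.Ici t₀, S₂ t = S t :=
  lyapunov_ode_existence_uniqueness_symmetric_general C θ t₀ 𝒜 h𝒜 M hM S₀ hS₀
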